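/- arXiv:1101.1291 — 6 statements merged into one kernel-verified Lean document; each statement's English description precedes it below -/
import Mathlib

section
/- In any finite digraph D = (V, A) with irreflexive arc relation, there exists an acyclic set S ⊆ V (i.e., the subdigraph induced by S contains no directed cycle) of size at least ∑_{v ∈ V} 1/(d⁺(v) + 1), where d⁺(v) is the out-degree of v. -/
open Finset

/-- `S` is an acyclic set for the arc relation `A`: the subdigraph induced by `S`
has no directed cycle (no vertex reaches itself via arcs inside `S`). -/
def AcyclicOn {V : Type*} (A : V → V → Prop) (S : Finset V) : Prop :=
  ∀ v : V, ¬ Relation.TransGen (fun x y => x ∈ S ∧ y ∈ S ∧ A x y) v v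

/-- The out-degree of `v`: the number of vertices `u` with an arc `(v, u)`. -/
def outDeg {V : Type*} [Fintype V] (A : V → V → Prop) [DecidableRel A] (v : V) : ℕ :=
  (Finset.univ.filter (fun u => A v u)).card

/-!
Greedy argument: pick a vertex `v` of minimum out-degree in the current vertex set `W`, put it
into the acyclic set and delete `v` together with its out-neighbours. The deleted vertices all have
out-degree at least `d⁺(v)` and there are `d⁺(v) + 1` of them, so they carry total weight at most
`1`; deleting vertices only lowers the remaining out-degrees, hence raises their weights. Since
none of the vertices kept later is an out-neighbour of `v`, `v` is a sink of the final set and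
cannot lie on a cycle.
-/

theorem Relation.TransGen.restrict_of_sink {α : Type*} {R : α → α → Prop} {v : α}
    (hv : ∀ x, ¬ R v x) {a b : α} (h : Relation.TransGen R a b) (hb : b ≠ v) :
    Relation.TransGen (fun x y => R x y ∧ x ≠ v ∧ y ≠ v) a b := by
  induction h with
  | single hab => exact .single ⟨hab, fun hav => hv _ (hav ▸ hab), hb⟩
  | @tail c d _ hcd ih =>
    have hc : c ≠ v := fun hcv => hv _ (hcv ▸ hcd)
    exact (ih hc).tail ⟨hcd, hc, hb⟩

namespace AcyclicOn

variable {V : Type*} {A : V → V → Prop}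

theorem empty : AcyclicOn A ∅ := fun _ hcyc => by
  obtain ⟨_, ⟨hmem, -⟩, -⟩ := Relation.TransGen.head'_iff.mp hcyc
  exact notMem_empty _ hmem

theorem insert_of_sink [DecidableEq V] {S : Finset V} {v : V} (hS : AcyclicOn A S)
    (hv : ∀ x ∈ insert v S, ¬ A v x) : AcyclicOn A (insert v S) := by
  have hsink : ∀ x, ¬ (v ∈ insert v S ∧ x ∈ insert v S ∧ A v x) :=
    fun x ⟨_, hx, hvx⟩ => hv x hx hvx
  intro w hcyc
  have hwv : w ≠ v := by
    rintro rfl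
    obtain ⟨x, hvx, -⟩ := Relation.TransGen.head'_iff.mp hcyc
    exact hsink x hvx
  refine hS w (Relation.TransGen.mono ?_ _ _ (hcyc.restrict_of_sink hsink hwv))
  rintro x y ⟨⟨hx, hy, hxy⟩, hxv, hyv⟩
  exact ⟨mem_of_mem_insert_of_ne hx hxv, mem_of_mem_insert_of_ne hy hyv, hxy⟩

end AcyclicOn

section Greedy

variable {V : Type*} (A : V → V → Prop) [DecidableRel A]

def outDegIn (W : Finset V) (u : V) : ℕ := (W.filter (A u)).card

variable {A}

theorem outDegIn_mono {W W' : Finset V} (h : W' ⊆ W) (u : V) :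
    outDegIn A W' u ≤ outDegIn A W u :=
  card_le_card (filter_subset_filter _ h)

theorem sum_insert_outNeighbors_le_one [DecidableEq V] {W : Finset V} {v : V} (hvv : ¬ A v v)
    (hmin : ∀ u ∈ W, outDegIn A W v ≤ outDegIn A W u) :
    ∑ u ∈ insert v (W.filter (A v)), (1 : ℝ) / (outDegIn A W u + 1) ≤ 1 := by
  have hv : v ∉ W.filter (A v) := fun h => hvv (mem_filter.mp h).2
  have hpos : (0 : ℝ) < outDegIn A W v + 1 := by positivity
  calc ∑ u ∈ insert v (W.filter (A v)), (1 : ℝ) / (outDegIn A W u + 1)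
      ≤ ∑ _u ∈ insert v (W.filter (A v)), (1 : ℝ) / (outDegIn A W v + 1) := by
        refine sum_le_sum fun u hu => one_div_le_one_div_of_le hpos ?_
        rcases mem_insert.mp hu with rfl | hu
        · exact le_rfl
        · exact_mod_cast Nat.add_le_add_right (hmin u (mem_filter.mp hu).1) 1
    _ = 1 := by
        rw [sum_const, nsmul_eq_mul, card_insert_of_notMem hv]
        simp only [outDegIn, Nat.cast_add, Nat.cast_one]
        field_simp

theorem exists_acyclicOn_subset_sum_le [DecidableEq V] (hirr : ∀ v, ¬ A v v) (W : Finset V) :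
    ∃ S ⊆ W, AcyclicOn A S ∧ ∑ u ∈ W, (1 : ℝ) / (outDegIn A W u + 1) ≤ S.card := by
  induction W using Finset.strongInduction with
  | H W ih =>
  rcases W.eq_empty_or_nonempty with rfl | hW
  · exact ⟨∅, subset_rfl, .empty, by simp⟩
  obtain ⟨v, hvW, hmin⟩ := W.exists_min_image (outDegIn A W) hW
  set T := insert v (W.filter (A v))
  have hTW : T ⊆ W := insert_subset hvW (filter_subset _ _)
  obtain ⟨S, hSW, hS, hsum⟩ := ih (W \ T) (sdiff_ssubset hTW (insert_nonempty _ _))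
  have hvS : v ∉ S := fun h => (mem_sdiff.mp (hSW h)).2 (mem_insert_self _ _)
  have hsink : ∀ x ∈ insert v S, ¬ A v x := by
    intro x hx hvx
    rcases mem_insert.mp hx with rfl | hx
    · exact hirr _ hvx
    · obtain ⟨hxW, hxT⟩ := mem_sdiff.mp (hSW hx)
      exact hxT (mem_insert_of_mem (mem_filter.mpr ⟨hxW, hvx⟩))
  refine ⟨insert v S, insert_subset hvW (hSW.trans sdiff_subset), hS.insert_of_sink hsink, ?_⟩
  calc ∑ u ∈ W, (1 : ℝ) / (outDegIn A W u + 1)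
      = ∑ u ∈ W \ T, (1 : ℝ) / (outDegIn A W u + 1)
          + ∑ u ∈ T, (1 : ℝ) / (outDegIn A W u + 1) := (sum_sdiff hTW).symm
    _ ≤ ∑ u ∈ W \ T, (1 : ℝ) / (outDegIn A (W \ T) u + 1) + 1 := by
        gcongr with u
        · exact_mod_cast outDegIn_mono sdiff_subset u
        · exact sum_insert_outNeighbors_le_one (hirr v) hmin
    _ ≤ (insert v S).card := by
        rw [card_insert_of_notMem hvS]
        push_cast
        linarith

end Greedy

/-- any finite digraph with irreflexive arc relation contains an
acyclic set of size at least `∑_v 1/(d⁺(v)+1)`. -/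
theorem exists_acyclic_set_caro_wei {V : Type*} [Fintype V] [DecidableEq V]
    (A : V → V → Prop) [DecidableRel A] (hirr : Irreflexive A) :
    ∃ S : Finset V, AcyclicOn A S ∧
      (∑ v : V, (1 : ℝ) / (outDeg A v + 1)) ≤ S.card := by
  obtain ⟨S, -, hS, hsum⟩ := exists_acyclicOn_subset_sum_le hirr (univ : Finset V)
  exact ⟨S, hS, hsum⟩
end

section
/- Let D be a finite digraph of order n with average out-degree d̄⁺ = (∑_v d⁺(v))/n. Then the feedback vertex number τ₀(D) satisfies τ₀(D) ≤ n · (1 − 1/(d̄⁺ + 1)); equivalently, D has an acyclic set of size at least n/(d̄⁺ + 1). -/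
/-!
Caro–Wei-type greedy argument: take a vertex `v` of minimum out-degree, delete it
together with its out-neighbours and recurse. Adding `v` back keeps the set acyclic, since `v` has
no out-arc into what is left, and the deleted vertices, each of out-degree at least that of `v`,
contribute at most `1` to `∑ 1 / (d⁺(u) + 1)`. Hence some acyclic set has at least
`∑ᵥ 1 / (d⁺(v) + 1)` vertices, which is at least `n² / (∑ᵥ d⁺(v) + n) = n / (d̄⁺ + 1)` by
Cauchy–Schwarz.
-/

open Finset

/-- The feedback vertex number: minimum size of a set `F` whose complement is acyclic. -/
noncomputable def tau0 {V : Type*} [Fintype V] [DecidableEq V] (A : V → V → Prop) : ℕ :=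
  sInf {k : ℕ | ∃ F : Finset V, AcyclicOn A (Finset.univ \ F) ∧ F.card = k}

lemma sum_inv_le_one_of_card_le {ι : Type*} {s : Finset ι} {f : ι → ℕ}
    (hf : ∀ i ∈ s, #s ≤ f i + 1) : ∑ i ∈ s, ((f i : ℝ) + 1)⁻¹ ≤ 1 := by
  obtain rfl | hs := s.eq_empty_or_nonempty
  · simp
  have hcard : (0 : ℝ) < #s := Nat.cast_pos.2 hs.card_pos
  calc ∑ i ∈ s, ((f i : ℝ) + 1)⁻¹ ≤ ∑ _i ∈ s, (#s : ℝ)⁻¹ :=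
        sum_le_sum fun i hi => inv_anti₀ hcard (by exact_mod_cast hf i hi)
    _ = 1 := by rw [sum_const, nsmul_eq_mul, mul_inv_cancel₀ hcard.ne']

lemma sq_card_div_le_sum_inv {ι : Type*} (s : Finset ι) (f : ι → ℕ) :
    (#s : ℝ) ^ 2 / (∑ i ∈ s, (f i : ℝ) + #s) ≤ ∑ i ∈ s, ((f i : ℝ) + 1)⁻¹ := by
  simpa [sum_add_distrib] using
    sq_sum_div_le_sum_sq_div s (fun _ => (1 : ℝ)) (g := fun i => (f i : ℝ) + 1)
      fun i _ => by positivity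

section Digraph

variable {V : Type*} {A : V → V → Prop}

lemma acyclicOn_empty : AcyclicOn A ∅ := fun v hv => by
  obtain ⟨_, h, -⟩ := Relation.TransGen.head'_iff.1 hv
  exact notMem_empty _ h.1

/-- Every arc of `insert v S` starts in `S`, so every closed walk in `insert v S` stays in `S`. -/
lemma AcyclicOn.insert_of_not_rel [DecidableEq V] {S : Finset V} {v : V} (hS : AcyclicOn A S)
    (hv : ∀ u ∈ insert v S, ¬ A v u) : AcyclicOn A (insert v S) := by
  have source_mem : ∀ x y, x ∈ insert v S ∧ y ∈ insert v S ∧ A x y → x ∈ S := by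
    rintro x y ⟨hx, hy, hxy⟩
    rcases mem_insert.1 hx with rfl | hx
    · exact absurd hxy (hv y hy)
    · exact hx
  have restrict : ∀ a b,
      Relation.TransGen (fun x y => x ∈ insert v S ∧ y ∈ insert v S ∧ A x y) a b →
      b ∈ S → Relation.TransGen (fun x y => x ∈ S ∧ y ∈ S ∧ A x y) a b := by
    intro a b hab
    induction hab with
    | single h => exact fun hb => .single ⟨source_mem _ _ h, hb, h.2.2⟩
    | tail _ h ih => exact fun hc => .tail (ih (source_mem _ _ h)) ⟨source_mem _ _ h, hc, h.2.2⟩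
  intro w hw
  obtain ⟨_, h, -⟩ := Relation.TransGen.head'_iff.1 hw
  exact hS w (restrict w w hw (source_mem _ _ h))

lemma tau0_le_card_sub_card [Fintype V] [DecidableEq V] {S : Finset V} (hS : AcyclicOn A S) :
    tau0 A ≤ Fintype.card V - #S := by
  have h : tau0 A ≤ #(univ \ S) :=
    Nat.sInf_le ⟨univ \ S, by rwa [sdiff_sdiff_right_self, inf_eq_inter, univ_inter], rfl⟩
  rwa [card_univ_sdiff] at h

theorem exists_acyclicOn_subset_sum_inv_le_card [DecidableEq V] [DecidableRel A]
    (hirr : ∀ v, ¬ A v v) (T : Finset V) :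
    ∃ S ⊆ T, AcyclicOn A S ∧ ∑ v ∈ T, ((#{u ∈ T | A v u} : ℝ) + 1)⁻¹ ≤ #S := by
  induction T using Finset.strongInduction with
  | H T ih =>
  obtain rfl | hT := T.eq_empty_or_nonempty
  · exact ⟨∅, empty_subset _, acyclicOn_empty, by simp⟩
  obtain ⟨v, hvT, hmin⟩ := T.exists_min_image (fun v => #{u ∈ T | A v u}) hT
  set R := insert v {u ∈ T | A v u}
  have hRT : R ⊆ T := insert_subset hvT (filter_subset _ _)
  obtain ⟨S, hST, hS, hsum⟩ := ih (T \ R) (sdiff_ssubset hRT ⟨v, mem_insert_self _ _⟩)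
  have hvS : v ∉ S := fun h => (mem_sdiff.1 (hST h)).2 (mem_insert_self _ _)
  have hv : ∀ u ∈ insert v S, ¬ A v u := by
    rintro u hu hvu
    rcases mem_insert.1 hu with rfl | hu
    · exact hirr _ hvu
    · have huT := mem_sdiff.1 (hST hu)
      exact huT.2 (mem_insert_of_mem (mem_filter.2 ⟨huT.1, hvu⟩))
  refine ⟨insert v S, insert_subset hvT (hST.trans sdiff_subset), hS.insert_of_not_rel hv, ?_⟩
  have hR : ∑ u ∈ R, ((#{w ∈ T | A u w} : ℝ) + 1)⁻¹ ≤ 1 :=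
    sum_inv_le_one_of_card_le fun u hu =>
      (card_insert_le _ _).trans (Nat.add_le_add_right (hmin u (hRT hu)) 1)
  have hTR : ∑ u ∈ T \ R, ((#{w ∈ T | A u w} : ℝ) + 1)⁻¹ ≤
      ∑ u ∈ T \ R, ((#{w ∈ T \ R | A u w} : ℝ) + 1)⁻¹ :=
    sum_le_sum fun u _ => inv_anti₀ (by positivity) <| by gcongr; exact sdiff_subset
  calc ∑ u ∈ T, ((#{w ∈ T | A u w} : ℝ) + 1)⁻¹
      = ∑ u ∈ T \ R, ((#{w ∈ T | A u w} : ℝ) + 1)⁻¹ +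
          ∑ u ∈ R, ((#{w ∈ T | A u w} : ℝ) + 1)⁻¹ :=
        (sum_sdiff hRT).symm
    _ ≤ #S + 1 := add_le_add (hTR.trans hsum) hR
    _ = #(insert v S) := by rw [card_insert_of_notMem hvS, Nat.cast_succ]

end Digraph

/-- `τ₀(D) ≤ n·(1 − 1/(d̄⁺+1))`; equivalently `D` has an acyclic set
of size at least `n/(d̄⁺+1)`, where `d̄⁺` is the average out-degree. -/
theorem tau0_le_of_avg_outdegree {V : Type*} [Fintype V] [DecidableEq V]
    (A : V → V → Prop) [DecidableRel A] (hirr : Irreflexive A)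
    (n : ℕ) (hn : n = Fintype.card V)
    (dbar : ℝ) (hd : dbar = (∑ v : V, (outDeg A v : ℝ)) / n) :
    (tau0 A : ℝ) ≤ n * (1 - 1 / (dbar + 1)) ∧
      ∃ S : Finset V, AcyclicOn A S ∧ (n : ℝ) / (dbar + 1) ≤ S.card := by
  subst hn
  obtain ⟨S, -, hS, hsum⟩ := exists_acyclicOn_subset_sum_inv_le_card hirr (univ : Finset V)
  have hbound : (Fintype.card V : ℝ) / (dbar + 1) ≤ #S := by
    calc (Fintype.card V : ℝ) / (dbar + 1)
        = (#(univ : Finset V) : ℝ) ^ 2 / (∑ v, (outDeg A v : ℝ) + #(univ : Finset V)) := by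
          rw [hd, card_univ]
          rcases eq_or_ne (Fintype.card V : ℝ) 0 with h | h
          · simp [h]
          · field_simp
      _ ≤ ∑ v, ((outDeg A v : ℝ) + 1)⁻¹ := sq_card_div_le_sum_inv _ _
      _ ≤ #S := hsum
  refine ⟨?_, S, hS, hbound⟩
  calc (tau0 A : ℝ) ≤ Fintype.card V - #S := by
        rw [← Nat.cast_sub (card_le_univ S)]
        exact_mod_cast tau0_le_card_sub_card hS
    _ ≤ Fintype.card V - Fintype.card V / (dbar + 1) := by linarith
    _ = Fintype.card V * (1 - 1 / (dbar + 1)) := by ring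
end

section
/- Let D be a finite digraph and suppose at each step the greedy process selects a vertex v_i of minimum out-degree in D_i. Then for every vertex w ∈ {v_i} ∪ N⁺_{D_i}(v_i), we have d⁺_D(w) + 1 ≥ |{v_i} ∪ N⁺_{D_i}(v_i)|, and consequently ∑_{w ∈ {v_i} ∪ N⁺_{D_i}(v_i)} 1/(d⁺_D(w) + 1) ≤ 1. -/
open Finset

/-- if at each step the greedy process selects a vertex `v i` of minimum
out-degree in `D_i` (vertex set `S i`, `S 0 = V`), then every `w` in the block
`{v_i} ∪ N⁺_{D_i}(v_i)` satisfies `d⁺_D(w) + 1 ≥ |{v_i} ∪ N⁺_{D_i}(v_i)|`, and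
consequently `∑_{w ∈ block} 1/(d⁺_D(w)+1) ≤ 1`. -/
theorem greedy_min_degree_block_bound {V : Type*} [Fintype V] [DecidableEq V]
    (A : V → V → Prop) [DecidableRel A] (hirr : Irreflexive A)
    (r : ℕ) (v : ℕ → V) (S : ℕ → Finset V)
    (h0 : S 0 = Finset.univ)
    (hmem : ∀ i < r, v i ∈ S i)
    (hstep : ∀ i < r, S (i + 1) = S i \ insert (v i) ((S i).filter (fun u => A (v i) u)))
    (hmin : ∀ i < r, ∀ w ∈ S i,
      ((S i).filter (fun u => A (v i) u)).card ≤ ((S i).filter (fun u => A w u)).card) :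
    ∀ i < r,
      (∀ w ∈ insert (v i) ((S i).filter (fun u => A (v i) u)),
          (insert (v i) ((S i).filter (fun u => A (v i) u))).card ≤ outDeg A w + 1) ∧
        ∑ w ∈ insert (v i) ((S i).filter (fun u => A (v i) u)),
            (1 : ℝ) / (outDeg A w + 1) ≤ 1 := by
  intro i hi
  set B := insert (v i) ((S i).filter (fun u => A (v i) u)) with hB
  have hvnot : v i ∉ (S i).filter (fun u => A (v i) u) := by
    simp [hirr (v i)]
  have hcard : B.card = ((S i).filter (fun u => A (v i) u)).card + 1 :=
    Finset.card_insert_of_notMem hvnot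
  have hkey : ∀ w ∈ B, B.card ≤ outDeg A w + 1 := by
    intro w hw
    have hsub : ∀ x, (S i).filter (fun u => A x u) ⊆ Finset.univ.filter (fun u => A x u) :=
      fun x => Finset.filter_subset_filter _ (Finset.subset_univ _)
    rcases Finset.mem_insert.mp hw with h | h
    · subst h
      have := Finset.card_le_card (hsub (v i))
      simp only [hcard, outDeg]
      omega
    · have hwS : w ∈ S i := (Finset.mem_filter.mp h).1
      have h1 := hmin i hi w hwS
      have h2 := Finset.card_le_card (hsub w)
      simp only [hcard, outDeg]
      omega
  refine ⟨hkey, ?_⟩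
  have hsum : ∑ w ∈ B, (1 : ℝ) / (outDeg A w + 1) ≤ ∑ _w ∈ B, (1 : ℝ) / B.card := by
    apply Finset.sum_le_sum
    intro w hw
    apply div_le_div_of_nonneg_left (by norm_num) _ _
    · have : (0:ℝ) < B.card := by
        have : v i ∈ B := Finset.mem_insert_self _ _
        exact_mod_cast Finset.card_pos.mpr ⟨_, this⟩
      exact this
    · exact_mod_cast hkey w hw
  calc ∑ w ∈ B, (1 : ℝ) / (outDeg A w + 1) ≤ ∑ _w ∈ B, (1 : ℝ) / B.card := hsum
    _ = B.card * (1 / B.card) := by rw [Finset.sum_const, nsmul_eq_mul]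
    _ ≤ 1 := by
        rcases Nat.eq_zero_or_pos B.card with h | h
        · simp [h]
        · rw [mul_one_div, div_le_one (by exact_mod_cast h)]
end

section
/- Every finite symmetric digraph D of order n contains an independent set of size at least ∑_{v ∈ V} 1/(d(v) + 1), where d(v) is the degree of v (equal to the out-degree in the symmetric case). (This recovers the Caro–Wei bound as a special case of the digraph acyclic-set bound.) -/
open Finset

/-- `S` is an independent set: no arcs inside `S`. -/
def IndepOn {V : Type*} (A : V → V → Prop) (S : Finset V) : Prop :=
  ∀ u ∈ S, ∀ w ∈ S, ¬ A u w

/-- Degree of `v` (= out-degree; in a symmetric digraph this is the undirected degree). -/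
def deg {V : Type*} [Fintype V] (A : V → V → Prop) [DecidableRel A] (v : V) : ℕ :=
  (Finset.univ.filter (fun u => A v u)).card

lemma caro_wei_aux {V : Type*} [Fintype V] [DecidableEq V]
    (A : V → V → Prop) [DecidableRel A] (hirr : Irreflexive A) (hsymm : Symmetric A)
    (T : Finset V) :
    ∃ S : Finset V, S ⊆ T ∧ IndepOn A S ∧
      (∑ v ∈ T, (1 : ℝ) / ((T.filter (fun u => A v u)).card + 1)) ≤ S.card := by
  induction T using Finset.strongInduction with
  | _ T ih =>
    rcases T.eq_empty_or_nonempty with rfl | hT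
    · exact ⟨∅, by simp, by simp [IndepOn], by simp⟩
    obtain ⟨v, hv, hmin⟩ := T.exists_min_image (fun u => (T.filter (fun w => A u w)).card) hT
    set N : Finset V := insert v (T.filter (fun u => A v u)) with hN
    have hNT : N ⊆ T := insert_subset hv (filter_subset _ _)
    set T' := T \ N with hTdef
    have hvN : v ∈ N := mem_insert_self _ _
    have hvT' : v ∉ T' := by simp [hTdef, hvN]
    have hss : T' ⊂ T := ssubset_of_subset_of_ne sdiff_subset (by
      intro h; exact hvT' (h ▸ hv))
    obtain ⟨S', hS'T, hS'ind, hS'sum⟩ := ih T' hss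
    have hT'sub : T' ⊆ T := sdiff_subset
    have hnadj : ∀ b ∈ S', ¬ A v b := by
      intro b hb hvb
      have hbT' := hS'T hb
      rw [hTdef, mem_sdiff] at hbT'
      exact hbT'.2 (mem_insert_of_mem (mem_filter.2 ⟨hbT'.1, hvb⟩))
    have hvS' : v ∉ S' := fun h => hvT' (hS'T h)
    refine ⟨insert v S', insert_subset hv (hS'T.trans hT'sub), ?_, ?_⟩
    · intro a ha b hb hab
      rcases mem_insert.1 ha with ha1 | ha2 <;> rcases mem_insert.1 hb with hb1 | hb2
      · rw [ha1, hb1] at hab; exact hirr _ hab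
      · rw [ha1] at hab; exact hnadj b hb2 hab
      · rw [hb1] at hab; exact hnadj a ha2 (hsymm hab)
      · exact hS'ind a ha2 b hb2 hab
    · have hcard : (insert v S').card = S'.card + 1 := card_insert_of_notMem hvS'
      have hsplit : ∑ u ∈ T, (1 : ℝ) / ((T.filter (fun w => A u w)).card + 1)
          = (∑ u ∈ T', (1 : ℝ) / ((T.filter (fun w => A u w)).card + 1))
            + ∑ u ∈ N, (1 : ℝ) / ((T.filter (fun w => A u w)).card + 1) := by
        rw [hTdef, sum_sdiff hNT]
      have hNcard : (N.card : ℝ) = (T.filter (fun u => A v u)).card + 1 := by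
        rw [hN, card_insert_of_notMem (by simp [hirr v])]
        push_cast; ring
      have h1 : ∑ u ∈ N, (1 : ℝ) / ((T.filter (fun w => A u w)).card + 1) ≤ 1 := by
        have hbound : ∀ u ∈ N, (1 : ℝ) / ((T.filter (fun w => A u w)).card + 1)
            ≤ 1 / ((T.filter (fun w => A v w)).card + 1) := by
          intro u hu
          apply one_div_le_one_div_of_le
          · positivity
          · have := hmin u (hNT hu)
            exact_mod_cast Nat.add_le_add_right this 1
        calc ∑ u ∈ N, (1 : ℝ) / ((T.filter (fun w => A u w)).card + 1)
            ≤ ∑ _u ∈ N, (1 : ℝ) / ((T.filter (fun w => A v w)).card + 1) :=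
              sum_le_sum hbound
          _ = N.card * (1 / ((T.filter (fun w => A v w)).card + 1)) := by
              rw [sum_const, nsmul_eq_mul]
          _ = 1 := by
              rw [hNcard]; field_simp
      have h2 : ∑ u ∈ T', (1 : ℝ) / ((T.filter (fun w => A u w)).card + 1)
          ≤ ∑ u ∈ T', (1 : ℝ) / ((T'.filter (fun w => A u w)).card + 1) := by
        apply sum_le_sum
        intro u _
        apply one_div_le_one_div_of_le
        · positivity
        · have : (T'.filter (fun w => A u w)).card ≤ (T.filter (fun w => A u w)).card :=
            card_le_card (filter_subset_filter _ hT'sub)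
          exact_mod_cast Nat.add_le_add_right this 1
      rw [hsplit, hcard]
      push_cast
      linarith
      
/-- Caro–Wei: every finite symmetric digraph contains an independent
set of size at least `∑_v 1/(d(v)+1)`. -/
theorem caro_wei {V : Type*} [Fintype V] [DecidableEq V]
    (A : V → V → Prop) [DecidableRel A] (hirr : Irreflexive A) (hsymm : Symmetric A) :
    ∃ S : Finset V, IndepOn A S ∧ (∑ v : V, (1 : ℝ) / (deg A v + 1)) ≤ S.card := by
  obtain ⟨S, _, hind, hsum⟩ := caro_wei_aux A hirr hsymm Finset.univ
  exact ⟨S, hind, by simpa [deg] using hsum⟩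
end

section
/- Let D be a finite digraph in which every vertex has out-degree at most k. Then D contains an acyclic set of size at least n/(k+1), where n is the order of D; equivalently τ₀(D) ≤ n·k/(k+1). -/
open Finset

/-!
Greedy construction: put any remaining vertex `v` into `S` and discard `v` together with its
at most `k` out-neighbours. Every discarded batch has at most `k + 1` vertices and contributes
one vertex to `S`. The vertices chosen after `v` are not out-neighbours of `v`, so `v` is a
sink of `D[S]`; hence it lies on no cycle of `D[S]`, and `S` stays acyclic.
-/

section Acyclic

variable {V : Type*} {A : V → V → Prop}

lemma AcyclicOn.insert_of_sink_s11 [DecidableEq V] {S : Finset V} {v : V} (hS : AcyclicOn A S)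
    (hsink : ∀ u ∈ insert v S, ¬ A v u) : AcyclicOn A (insert v S) := by
  set R' : V → V → Prop := fun x y => x ∈ insert v S ∧ y ∈ insert v S ∧ A x y
  have source_ne : ∀ {x y}, R' x y → x ≠ v := by
    rintro x y ⟨-, hy, hxy⟩ rfl
    exact hsink y hy hxy
  have restrict : ∀ {x y}, R' x y → y ≠ v → x ∈ S ∧ y ∈ S ∧ A x y := fun h hy =>
    ⟨mem_of_mem_insert_of_ne h.1 (source_ne h), mem_of_mem_insert_of_ne h.2.1 hy, h.2.2⟩
  have avoid_v : ∀ {a b}, Relation.TransGen R' a b → b ≠ v →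
      Relation.TransGen (fun x y => x ∈ S ∧ y ∈ S ∧ A x y) a b := by
    intro a b hab hb
    induction hab with
    | single h => exact .single (restrict h hb)
    | tail _ h ih => exact .tail (ih (source_ne h)) (restrict h hb)
  intro w hw
  obtain ⟨_, hwc, _⟩ := Relation.TransGen.head'_iff.mp hw
  exact hS w (avoid_v hw (source_ne hwc))

end Acyclic

lemma exists_acyclicOn_subset_card_le {V : Type*} [Fintype V] [DecidableEq V]
    {A : V → V → Prop} [DecidableRel A] (hirr : Irreflexive A) {k : ℕ}
    (hk : ∀ v, outDeg A v ≤ k) (T : Finset V) :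
    ∃ S ⊆ T, AcyclicOn A S ∧ #T ≤ (k + 1) * #S := by
  induction T using Finset.strongInduction with
  | _ T ih =>
    rcases T.eq_empty_or_nonempty with rfl | ⟨v, hvT⟩
    · exact ⟨∅, empty_subset _, acyclicOn_empty, by simp⟩
    set batch := insert v {u ∈ T | A v u}
    have hbatch : batch ⊆ T := insert_subset hvT (filter_subset _ _)
    obtain ⟨S, hST, hS, hcard⟩ :=
      ih (T \ batch) (sdiff_ssubset hbatch ⟨v, mem_insert_self _ _⟩)
    have hvS : v ∉ S := fun h => (mem_sdiff.mp (hST h)).2 (mem_insert_self _ _)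
    have hsink : ∀ u ∈ insert v S, ¬ A v u := by
      intro u hu hvu
      rcases mem_insert.mp hu with rfl | hu
      · exact hirr _ hvu
      · obtain ⟨huT, hub⟩ := mem_sdiff.mp (hST hu)
        exact hub (mem_insert_of_mem (mem_filter.mpr ⟨huT, hvu⟩))
    have hbatch_card : #batch ≤ k + 1 := by
      refine (card_insert_le _ _).trans (Nat.succ_le_succ ((card_le_card ?_).trans (hk v)))
      exact fun u hu => mem_filter.mpr ⟨mem_univ u, (mem_filter.mp hu).2⟩
    refine ⟨insert v S, insert_subset hvT (hST.trans sdiff_subset), hS.insert_of_sink_s11 hsink, ?_⟩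
    calc #T ≤ #(T \ batch) + #batch := card_le_card_sdiff_add_card
      _ ≤ (k + 1) * #S + (k + 1) := by omega
      _ = (k + 1) * #(insert v S) := by rw [card_insert_of_notMem hvS]; ring

lemma tau0_le_card_compl {V : Type*} [Fintype V] [DecidableEq V] {A : V → V → Prop}
    {S : Finset V} (hS : AcyclicOn A S) : tau0 A ≤ Fintype.card V - #S := by
  rw [← card_univ, ← card_sdiff_of_subset (subset_univ S)]
  exact Nat.sInf_le ⟨univ \ S, by rwa [Finset.sdiff_sdiff_eq_self (subset_univ S)], rfl⟩

/-- if every vertex has out-degree at most `k`, then `D` has an acyclic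
set of size at least `n/(k+1)`; equivalently `τ₀(D) ≤ n·k/(k+1)`. -/
theorem acyclic_set_of_bounded_outdegree {V : Type*} [Fintype V] [DecidableEq V]
    (A : V → V → Prop) [DecidableRel A] (hirr : Irreflexive A)
    (k : ℕ) (hk : ∀ v : V, outDeg A v ≤ k)
    (n : ℕ) (hn : n = Fintype.card V) :
    (∃ S : Finset V, AcyclicOn A S ∧ (n : ℝ) / (k + 1) ≤ S.card) ∧
      (tau0 A : ℝ) ≤ n * k / (k + 1) := by
  obtain ⟨S, -, hS, hcard⟩ := exists_acyclicOn_subset_card_le hirr hk univ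
  rw [card_univ, ← hn] at hcard
  have hk1 : (0 : ℝ) < k + 1 := by positivity
  have hSn : (n : ℝ) / (k + 1) ≤ #S := by
    rw [div_le_iff₀ hk1]
    exact_mod_cast hcard.trans_eq (mul_comm _ _)
  have htau : (tau0 A : ℝ) ≤ n - #S := by
    have hle : #S ≤ n := hn ▸ card_le_univ S
    rw [← Nat.cast_sub hle]
    exact_mod_cast hn ▸ tau0_le_card_compl hS
  refine ⟨⟨S, hS, hSn⟩, htau.trans ?_⟩
  calc (n : ℝ) - #S ≤ n - n / (k + 1) := by linarith
    _ = n * k / (k + 1) := by field_simp; ring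
end

section
/- For any finite digraph D of order n with m arcs, τ₀(D) ≤ n − n²/(m + n), i.e., D has an acyclic set of size at least n²/(m+n). -/
open Finset

private lemma step_ineq (s E k t : ℝ) (hs : 0 ≤ s) (hE : 0 ≤ E) (hk : 0 ≤ k)
    (h : t ^ 2 ≤ s * E) : (t + k) ^ 2 ≤ (s + 1) * (E + k ^ 2) := by
  nlinarith [sq_nonneg (s * k ^ 2 - E), mul_nonneg (mul_nonneg hs hk) hk,
    sq_nonneg (s * k - t), sq_nonneg (s * k + t), mul_nonneg hs hE]

private lemma acyclicOn_empty_s14 {V : Type*} [DecidableEq V] (A : V → V → Prop) :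
    AcyclicOn A (∅ : Finset V) := by
  intro v h
  cases h with
  | single h => exact absurd h.1 (Finset.notMem_empty v)
  | tail h h' => exact absurd h'.2.1 (Finset.notMem_empty v)

private lemma acyclicOn_insert {V : Type*} [DecidableEq V] (A : V → V → Prop)
    (S' : Finset V) (v : V) (h1 : AcyclicOn A S') (h2 : ∀ x ∈ S', ¬ A x v)
    (h3 : ¬ A v v) : AcyclicOn A (insert v S') := by
  intro w hw
  have hend : ∀ x y : V, (x ∈ insert v S' ∧ y ∈ insert v S' ∧ A x y) → y ≠ v := by
    rintro x y ⟨hx, hy, hA⟩ rfl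
    rcases Finset.mem_insert.1 hx with rfl | hx'
    · exact h3 hA
    · exact h2 x hx' hA
  have key : ∀ x y : V,
      Relation.TransGen (fun a b => a ∈ insert v S' ∧ b ∈ insert v S' ∧ A a b) x y →
      x ≠ v → Relation.TransGen (fun a b => a ∈ S' ∧ b ∈ S' ∧ A a b) x y ∧ y ≠ v := by
    intro x y h
    induction h with
    | single h =>
        intro hx
        have hyv := hend _ _ h
        obtain ⟨hxm, hym, hA⟩ := h
        exact ⟨Relation.TransGen.single
          ⟨(Finset.mem_insert.1 hxm).resolve_left hx,
           (Finset.mem_insert.1 hym).resolve_left hyv, hA⟩, hyv⟩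
    | tail hxb hby ih =>
        intro hx
        obtain ⟨h1', hbv⟩ := ih hx
        have hyv := hend _ _ hby
        obtain ⟨hbm, hym, hA⟩ := hby
        exact ⟨h1'.tail ⟨(Finset.mem_insert.1 hbm).resolve_left hbv,
          (Finset.mem_insert.1 hym).resolve_left hyv, hA⟩, hyv⟩
  by_cases hwv : w = v
  · subst hwv
    cases hw with
    | single h => exact hend _ _ h rfl
    | tail h h' => exact hend _ _ h' rfl
  · exact h1 w (key w w hw hwv).1

private lemma exists_acyclic {V : Type*} [DecidableEq V] (A : V → V → Prop)
    [DecidableRel A] (hirr : Irreflexive A) (U : Finset V) :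
    ∃ S : Finset V, S ⊆ U ∧ AcyclicOn A S ∧
      (U.card : ℝ) ^ 2 ≤ S.card *
        ((((U ×ˢ U).filter fun p : V × V => A p.1 p.2).card : ℝ) + U.card) := by
  induction U using Finset.strongInduction with
  | _ U ih =>
  rcases U.eq_empty_or_nonempty with rfl | hne
  · exact ⟨∅, Finset.Subset.refl _, acyclicOn_empty_s14 A, by simp⟩
  obtain ⟨v, hv, hmin⟩ := Finset.exists_min_image U
    (fun w => (U.filter fun u => A u w).card) hne
  set N : Finset V := U.filter (fun u => A u v) with hN
  set d : ℕ := N.card with hd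
  have hvN : v ∉ N := fun h => hirr v (Finset.mem_filter.1 h).2
  set T : Finset V := insert v N with hTdef
  have hTcard : T.card = d + 1 := Finset.card_insert_of_notMem hvN
  have hTU : T ⊆ U := Finset.insert_subset hv (Finset.filter_subset _ _)
  set U' : Finset V := U \ T with hU'def
  have hU'ss : U' ⊂ U := Finset.sdiff_ssubset hTU ⟨v, Finset.mem_insert_self _ _⟩
  obtain ⟨S', hS'U', hS'ac, hS'ineq⟩ := ih U' hU'ss
  have hvT : v ∈ T := Finset.mem_insert_self _ _
  have hvU' : v ∉ U' := fun h => (Finset.mem_sdiff.1 h).2 hvT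
  have hvS' : v ∉ S' := fun h => hvU' (hS'U' h)
  refine ⟨insert v S', Finset.insert_subset hv (hS'U'.trans (Finset.sdiff_subset)), ?_, ?_⟩
  · refine acyclicOn_insert A S' v hS'ac ?_ (hirr v)
    intro x hx hAxv
    have hxU' := hS'U' hx
    obtain ⟨hxU, hxT⟩ := Finset.mem_sdiff.1 hxU'
    exact hxT (Finset.mem_insert_of_mem (Finset.mem_filter.2 ⟨hxU, hAxv⟩))
  -- arithmetic
  · set mU : ℕ := ((U ×ˢ U).filter fun p : V × V => A p.1 p.2).card with hmU
    set mU' : ℕ := ((U' ×ˢ U').filter fun p : V × V => A p.1 p.2).card with hmU'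
    -- arcs with head in T
    set B : Finset (V × V) := T.biUnion
      (fun t => (U.filter fun u => A u t).image fun u => (u, t)) with hBdef
    have hBcard : B.card = ∑ t ∈ T, (U.filter fun u => A u t).card := by
      rw [Finset.card_biUnion]
      · exact Finset.sum_congr rfl fun t _ =>
          Finset.card_image_of_injective _ (fun a b h => (Prod.mk.injEq _ _ _ _ ▸ h).1)
      · intro x _ y _ hxy
        simp only [Finset.disjoint_left]
        intro p hp hq
        obtain ⟨a, _, rfl⟩ := Finset.mem_image.1 hp
        obtain ⟨b, _, hb⟩ := Finset.mem_image.1 hq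
        exact hxy ((Prod.mk.injEq _ _ _ _ ▸ hb.symm).2)
    have hBge : (d + 1) * d ≤ B.card := by
      rw [hBcard]
      calc (d + 1) * d = ∑ _t ∈ T, d := by rw [Finset.sum_const, hTcard, smul_eq_mul]
        _ ≤ ∑ t ∈ T, (U.filter fun u => A u t).card :=
          Finset.sum_le_sum fun t ht => hmin t (hTU ht)
    have hdisj : Disjoint ((U' ×ˢ U').filter fun p : V × V => A p.1 p.2) B := by
      simp only [Finset.disjoint_left]
      intro p hp hq
      obtain ⟨hpm, _⟩ := Finset.mem_filter.1 hp
      have hp2 : p.2 ∈ U' := (Finset.mem_product.1 hpm).2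
      obtain ⟨t, ht, hb⟩ := Finset.mem_biUnion.1 hq
      obtain ⟨a, _, rfl⟩ := Finset.mem_image.1 hb
      exact (Finset.mem_sdiff.1 hp2).2 ht
    have hsub : ((U' ×ˢ U').filter fun p : V × V => A p.1 p.2) ∪ B ⊆
        (U ×ˢ U).filter fun p : V × V => A p.1 p.2 := by
      intro p hp
      rcases Finset.mem_union.1 hp with hp | hp
      · obtain ⟨hpm, hA⟩ := Finset.mem_filter.1 hp
        obtain ⟨h1, h2⟩ := Finset.mem_product.1 hpm
        exact Finset.mem_filter.2 ⟨Finset.mem_product.2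
          ⟨(Finset.mem_sdiff.1 h1).1, (Finset.mem_sdiff.1 h2).1⟩, hA⟩
      · obtain ⟨t, ht, hb⟩ := Finset.mem_biUnion.1 hp
        obtain ⟨a, ha, rfl⟩ := Finset.mem_image.1 hb
        obtain ⟨haU, hA⟩ := Finset.mem_filter.1 ha
        exact Finset.mem_filter.2 ⟨Finset.mem_product.2 ⟨haU, hTU ht⟩, hA⟩
    have harc : mU' + (d + 1) * d ≤ mU := by
      calc mU' + (d + 1) * d ≤ mU' + B.card := by omega
        _ = (((U' ×ˢ U').filter fun p : V × V => A p.1 p.2) ∪ B).card :=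
          (Finset.card_union_of_disjoint hdisj).symm
        _ ≤ mU := Finset.card_le_card hsub
    have hkn : d + 1 ≤ U.card := hTcard ▸ Finset.card_le_card hTU
    have hU'card : U'.card = U.card - (d + 1) := by
      rw [hU'def, Finset.card_sdiff_of_subset hTU, hTcard]
    have hScard : (insert v S').card = S'.card + 1 := Finset.card_insert_of_notMem hvS'
    -- to reals
    have hUcast : (U.card : ℝ) = (U'.card : ℝ) + (d + 1) := by
      rw [hU'card]
      push_cast [Nat.cast_sub hkn]
      ring
    have hmcast : (mU' : ℝ) + ((d : ℝ) + 1) * d ≤ mU := by exact_mod_cast harc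
    have key := step_ineq (S'.card : ℝ) ((mU' : ℝ) + U'.card) ((d : ℝ) + 1) (U'.card : ℝ)
      (by positivity) (by positivity) (by positivity) hS'ineq
    rw [hScard, hUcast]
    push_cast
    nlinarith [key, Nat.cast_nonneg (α := ℝ) S'.card]

/-- a digraph with `n` vertices and `m` arcs satisfies
`τ₀(D) ≤ n − n²/(m+n)`, i.e. it has an acyclic set of size at least `n²/(m+n)`. -/
theorem tau0_le_of_arc_count {V : Type*} [Fintype V] [DecidableEq V]
    (A : V → V → Prop) [DecidableRel A] (hirr : Irreflexive A)
    (n : ℕ) (hn : n = Fintype.card V)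
    (m : ℕ) (hm : m = (Finset.univ.filter (fun p : V × V => A p.1 p.2)).card) :
    (tau0 A : ℝ) ≤ n - n ^ 2 / (m + n) ∧
      ∃ S : Finset V, AcyclicOn A S ∧ (n : ℝ) ^ 2 / (m + n) ≤ S.card := by
  obtain ⟨S, hSU, hSac, hSineq⟩ := exists_acyclic A hirr (Finset.univ : Finset V)
  have hcardU : (Finset.univ : Finset V).card = n := by rw [hn, Finset.card_univ]
  have hprod : ((Finset.univ ×ˢ Finset.univ : Finset (V × V)).filter
      fun p : V × V => A p.1 p.2).card = m := by
    rw [hm, Finset.univ_product_univ]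
  rw [hcardU, hprod] at hSineq
  have hdiv : (n : ℝ) ^ 2 / (m + n) ≤ S.card := by
    rcases Nat.eq_zero_or_pos (m + n) with h0 | hpos
    · have hn0 : n = 0 := by omega
      have hm0 : m = 0 := by omega
      simp [hn0, hm0]
    · have hpos' : (0 : ℝ) < (m : ℝ) + n := by
        have : (0 : ℝ) < ((m + n : ℕ) : ℝ) := by exact_mod_cast hpos
        push_cast at this; linarith
      rw [div_le_iff₀ hpos']
      exact hSineq
  refine ⟨?_, S, hSac, hdiv⟩
  have hScard : S.card ≤ n := by
    rw [← hcardU]; exact Finset.card_le_card hSU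
  have htau : tau0 A ≤ n - S.card := by
    apply Nat.sInf_le
    refine ⟨Finset.univ \ S, ?_, ?_⟩
    · have : Finset.univ \ (Finset.univ \ S) = S := by
        ext x; simp
      rwa [this]
    · rw [Finset.card_sdiff_of_subset (Finset.subset_univ S), Finset.card_univ, ← hn]
  have h1 : (tau0 A : ℝ) ≤ (n : ℝ) - S.card := by
    have := Nat.cast_le (α := ℝ).2 htau
    rwa [Nat.cast_sub hScard] at this
  linarith
end
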